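/- Let S be a finite nonempty type, γ ∈ [0,1), R_max ≥ 0, r : S → ℝ with |r s| ≤ R_max for all s, μ : PMF S, and let P, P' : S → PMF S be two transition kernels. Then |J(μ, P) − J(μ, P')| ≤ (2·γ·R_max / (1−γ)²) · ∑_s ρ_{μ,P}(s) · TV(P s, P' s). -/

import Mathlib

open scoped ENNReal

/-- The `t`-fold bind iterate of an initial distribution `μ` under transition kernel `P`:
`μ_0 = μ`, `μ_{t+1} = μ_t.bind P`. -/
noncomputable def stepDist {S : Type*} (P : S → PMF S) (μ : PMF S) : ℕ → PMF S
  | 0 => μ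
  | (t + 1) => (stepDist P μ t).bind P

/-- Discounted value `J(μ, P) = ∑'_t γ^t ∑_s μ_t^P(s) · r(s)`. -/
noncomputable def discValue {S : Type*} [Fintype S] (γ : ℝ) (r : S → ℝ)
    (μ : PMF S) (P : S → PMF S) : ℝ :=
  ∑' t : ℕ, γ ^ t * ∑ s, (stepDist P μ t s).toReal * r s

/-- Discounted visitation distribution `ρ_{μ,P}(s) = (1−γ) ∑'_t γ^t μ_t^P(s)`. -/
noncomputable def visitDist {S : Type*} (γ : ℝ) (μ : PMF S) (P : S → PMF S) (s : S) : ℝ :=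
  (1 - γ) * ∑' t : ℕ, γ ^ t * (stepDist P μ t s).toReal

/-- Total variation distance `TV(p, q) = (1/2) ∑_s |p s − q s|` on a finite type. -/
noncomputable def tvDist {S : Type*} [Fintype S] (p q : PMF S) : ℝ :=
  (1 / 2) * ∑ s, |(p s).toReal - (q s).toReal|

/-!
Write `D t` for the total variation distance between the `t`-step distributions under `P` and
`P'`. Passing through `μ_t.bind P'` by the triangle inequality, and using that a common kernel
does not increase total variation, gives `D (t + 1) ≤ D t + ∑ a, μ_t(a) · TV(P a, P' a)`, with
`D 0 = 0`. The value gap at time `t` is at most `2 Rmax · D t`; discounting the recursion bounds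
`∑ γ^t D t` by `γ / (1 - γ)` times the discounted cost `∑ γ^t ∑ a, μ_t(a) · TV(P a, P' a)`, which
is the visitation-weighted sum divided by `1 - γ`.
-/

namespace PMF

variable {S : Type*}

theorem toReal_le_one (p : PMF S) (s : S) : (p s).toReal ≤ 1 :=
  ENNReal.toReal_le_of_le_ofReal zero_le_one (by simpa using p.coe_le_one s)

variable [Fintype S]

theorem sum_toReal_eq_one (p : PMF S) : ∑ s, (p s).toReal = 1 := by
  rw [← ENNReal.toReal_sum fun s _ => p.apply_ne_top s, ← tsum_fintype (L := .unconditional S),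
    p.tsum_coe, ENNReal.toReal_one]

theorem toReal_bind_apply (p : PMF S) (K : S → PMF S) (s : S) :
    (p.bind K s).toReal = ∑ a, (p a).toReal * (K a s).toReal := by
  rw [bind_apply, tsum_fintype, ENNReal.toReal_sum fun a _ =>
    ENNReal.mul_ne_top (p.apply_ne_top a) ((K a).apply_ne_top s)]
  simp only [ENNReal.toReal_mul]

theorem abs_sum_toReal_mul_le (p : PMF S) {f : S → ℝ} {C : ℝ} (hf : ∀ s, |f s| ≤ C) :
    |∑ s, (p s).toReal * f s| ≤ C := by
  calc |∑ s, (p s).toReal * f s| ≤ ∑ s, (p s).toReal * C := by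
        refine (Finset.abs_sum_le_sum_abs _ _).trans (Finset.sum_le_sum fun s _ => ?_)
        rw [abs_mul, ENNReal.abs_toReal]
        exact mul_le_mul_of_nonneg_left (hf s) ENNReal.toReal_nonneg
    _ = C := by rw [← Finset.sum_mul, p.sum_toReal_eq_one, one_mul]

end PMF

section TotalVariation

variable {S : Type*} [Fintype S]

theorem tvDist_nonneg (p q : PMF S) : 0 ≤ tvDist p q := by
  unfold tvDist; positivity

theorem tvDist_le_one (p q : PMF S) : tvDist p q ≤ 1 := by
  have h : ∑ s, |(p s).toReal - (q s).toReal| ≤ ∑ s, ((p s).toReal + (q s).toReal) :=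
    Finset.sum_le_sum fun s _ => (abs_sub _ _).trans_eq <| by
      rw [ENNReal.abs_toReal, ENNReal.abs_toReal]
  rw [Finset.sum_add_distrib, p.sum_toReal_eq_one, q.sum_toReal_eq_one] at h
  unfold tvDist; linarith

theorem abs_tvDist_le_one (p q : PMF S) : |tvDist p q| ≤ 1 := by
  rw [abs_of_nonneg (tvDist_nonneg p q)]
  exact tvDist_le_one p q

theorem tvDist_self (p : PMF S) : tvDist p p = 0 := by
  simp [tvDist]

theorem tvDist_triangle (p q r : PMF S) : tvDist p r ≤ tvDist p q + tvDist q r := by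
  unfold tvDist
  rw [← mul_add, ← Finset.sum_add_distrib]
  gcongr with s
  exact abs_sub_le _ _ _

theorem abs_sum_toReal_mul_sub_le (p q : PMF S) {f : S → ℝ} {C : ℝ} (hf : ∀ s, |f s| ≤ C) :
    |∑ s, (p s).toReal * f s - ∑ s, (q s).toReal * f s| ≤ 2 * C * tvDist p q := by
  rw [← Finset.sum_sub_distrib]
  calc |∑ s, ((p s).toReal * f s - (q s).toReal * f s)|
      ≤ ∑ s, |(p s).toReal - (q s).toReal| * C := by
        refine (Finset.abs_sum_le_sum_abs _ _).trans (Finset.sum_le_sum fun s _ => ?_)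
        rw [← sub_mul, abs_mul]
        exact mul_le_mul_of_nonneg_left (hf s) (abs_nonneg _)
    _ = 2 * C * tvDist p q := by unfold tvDist; rw [← Finset.sum_mul]; ring

theorem sum_abs_sum_le {x : S → S → ℝ} : ∑ s, |∑ a, x a s| ≤ ∑ a, ∑ s, |x a s| := by
  rw [Finset.sum_comm]
  exact Finset.sum_le_sum fun s _ => Finset.abs_sum_le_sum_abs _ _

theorem tvDist_bind_le (p q : PMF S) (K : S → PMF S) :
    tvDist (p.bind K) (q.bind K) ≤ tvDist p q := by
  unfold tvDist
  refine mul_le_mul_of_nonneg_left ?_ (by norm_num)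
  calc ∑ s, |((p.bind K) s).toReal - ((q.bind K) s).toReal|
      = ∑ s, |∑ a, ((p a).toReal - (q a).toReal) * (K a s).toReal| := by
        simp only [PMF.toReal_bind_apply, ← Finset.sum_sub_distrib, sub_mul]
    _ ≤ ∑ a, ∑ s, |((p a).toReal - (q a).toReal) * (K a s).toReal| := sum_abs_sum_le
    _ = ∑ a, |(p a).toReal - (q a).toReal| := by
        simp only [abs_mul, ENNReal.abs_toReal, ← Finset.mul_sum, PMF.sum_toReal_eq_one,
          mul_one]

theorem tvDist_bind_bind_le (p : PMF S) (K K' : S → PMF S) :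
    tvDist (p.bind K) (p.bind K') ≤ ∑ a, (p a).toReal * tvDist (K a) (K' a) := by
  unfold tvDist
  simp only [mul_left_comm _ (1 / 2 : ℝ), ← Finset.mul_sum]
  refine mul_le_mul_of_nonneg_left ?_ (by norm_num)
  calc ∑ s, |((p.bind K) s).toReal - ((p.bind K') s).toReal|
      = ∑ s, |∑ a, (p a).toReal * ((K a s).toReal - (K' a s).toReal)| := by
        simp only [PMF.toReal_bind_apply, ← Finset.sum_sub_distrib, mul_sub]
    _ ≤ ∑ a, ∑ s, |(p a).toReal * ((K a s).toReal - (K' a s).toReal)| := sum_abs_sum_le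
    _ = ∑ a, (p a).toReal * ∑ s, |(K a s).toReal - (K' a s).toReal| := by
        simp only [abs_mul, ENNReal.abs_toReal, ← Finset.mul_sum]

end TotalVariation

section Discounting

variable {γ : ℝ}

theorem summable_pow_mul_of_abs_le (hγ0 : 0 ≤ γ) (hγ1 : γ < 1) {a : ℕ → ℝ} {C : ℝ}
    (ha : ∀ t, |a t| ≤ C) : Summable fun t => γ ^ t * a t :=
  .of_norm_bounded ((summable_geometric_of_lt_one hγ0 hγ1).mul_right C) fun t => by
    rw [Real.norm_eq_abs, abs_mul, abs_pow, abs_of_nonneg hγ0]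
    exact mul_le_mul_of_nonneg_left (ha t) (pow_nonneg hγ0 t)

-- Shifting the index turns the recursion into `A ≤ γ A + γ B` for the discounted sums of `d, e`.
theorem tsum_pow_mul_le_of_succ_le_add (hγ0 : 0 ≤ γ) (hγ1 : γ < 1) {d e : ℕ → ℝ}
    (hd0 : d 0 ≤ 0) (hde : ∀ t, d (t + 1) ≤ d t + e t)
    (hd : Summable fun t => γ ^ t * d t) (he : Summable fun t => γ ^ t * e t) :
    ∑' t, γ ^ t * d t ≤ γ / (1 - γ) * ∑' t, γ ^ t * e t := by
  have hsucc : ∀ t, γ ^ (t + 1) * (d t + e t) = γ * (γ ^ t * d t) + γ * (γ ^ t * e t) :=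
    fun t => by ring
  have hAB : ∑' t, γ ^ t * d t ≤ γ * ∑' t, γ ^ t * d t + γ * ∑' t, γ ^ t * e t :=
    calc ∑' t, γ ^ t * d t = d 0 + ∑' t, γ ^ (t + 1) * d (t + 1) := by
          rw [hd.tsum_eq_zero_add, pow_zero, one_mul]
      _ ≤ ∑' t, γ ^ (t + 1) * (d t + e t) := by
          refine add_le_of_nonpos_of_le hd0 (Summable.tsum_le_tsum
            (fun t => mul_le_mul_of_nonneg_left (hde t) (pow_nonneg hγ0 _))
            ((summable_nat_add_iff 1).mpr hd) ?_)
          simp only [hsucc]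
          exact (hd.mul_left γ).add (he.mul_left γ)
      _ = γ * ∑' t, γ ^ t * d t + γ * ∑' t, γ ^ t * e t := by
          simp only [hsucc]
          rw [(hd.mul_left γ).tsum_add (he.mul_left γ), tsum_mul_left, tsum_mul_left]
  rw [div_mul_eq_mul_div, le_div_iff₀ (sub_pos.mpr hγ1)]
  linarith

end Discounting

section MarkovChain

variable {S : Type*} [Fintype S] {γ : ℝ} (μ : PMF S) (P P' : S → PMF S)

theorem tvDist_stepDist_succ_le (t : ℕ) :
    tvDist (stepDist P μ (t + 1)) (stepDist P' μ (t + 1)) ≤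
      tvDist (stepDist P μ t) (stepDist P' μ t) +
        ∑ a, (stepDist P μ t a).toReal * tvDist (P a) (P' a) :=
  calc tvDist ((stepDist P μ t).bind P) ((stepDist P' μ t).bind P')
      ≤ tvDist ((stepDist P μ t).bind P) ((stepDist P μ t).bind P') +
          tvDist ((stepDist P μ t).bind P') ((stepDist P' μ t).bind P') := tvDist_triangle _ _ _
    _ ≤ _ := by
        rw [add_comm]
        exact add_le_add (tvDist_bind_le _ _ _) (tvDist_bind_bind_le _ _ _)

theorem sum_visitDist_mul (hγ0 : 0 ≤ γ) (hγ1 : γ < 1) (c : S → ℝ) :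
    ∑ s, visitDist γ μ P s * c s =
      (1 - γ) * ∑' t, γ ^ t * ∑ s, (stepDist P μ t s).toReal * c s := by
  have hsummable : ∀ s ∈ Finset.univ,
      Summable fun t => γ ^ t * ((stepDist P μ t s).toReal * c s) :=
    fun s _ => summable_pow_mul_of_abs_le hγ0 hγ1 fun t => by
      rw [abs_mul, ENNReal.abs_toReal]
      exact mul_le_of_le_one_left (abs_nonneg _) (PMF.toReal_le_one _ _)
  simp only [visitDist, mul_assoc, ← tsum_mul_right, Finset.mul_sum]
  rw [← Finset.mul_sum, Summable.tsum_finsetSum hsummable]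

theorem abs_discValue_sub_le (hγ0 : 0 ≤ γ) (hγ1 : γ < 1) {r : S → ℝ} {C : ℝ}
    (hr : ∀ s, |r s| ≤ C) :
    |discValue γ r μ P - discValue γ r μ P'| ≤
      2 * C * ∑' t, γ ^ t * tvDist (stepDist P μ t) (stepDist P' μ t) := by
  have hJ (Q : S → PMF S) : Summable fun t => γ ^ t * ∑ s, (stepDist Q μ t s).toReal * r s :=
    summable_pow_mul_of_abs_le hγ0 hγ1 fun t => (stepDist Q μ t).abs_sum_toReal_mul_le hr
  have htv : Summable fun t => γ ^ t * tvDist (stepDist P μ t) (stepDist P' μ t) :=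
    summable_pow_mul_of_abs_le hγ0 hγ1 fun t => abs_tvDist_le_one _ _
  rw [discValue, discValue, ← (hJ P).tsum_sub (hJ P'), ← tsum_mul_left,
    ← Real.norm_eq_abs]
  refine tsum_of_norm_bounded (htv.mul_left (2 * C)).hasSum fun t => ?_
  rw [Real.norm_eq_abs, ← mul_sub, abs_mul, abs_of_nonneg (pow_nonneg hγ0 t), mul_left_comm]
  exact mul_le_mul_of_nonneg_left (abs_sum_toReal_mul_sub_le _ _ hr) (pow_nonneg hγ0 t)

end MarkovChain

theorem visitation_weighted_simulation_lemma_general {S : Type*} [Fintype S]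
    (γ : ℝ) (hγ0 : 0 ≤ γ) (hγ1 : γ < 1)
    (Rmax : ℝ) (hR : 0 ≤ Rmax) (r : S → ℝ) (hr : ∀ s, |r s| ≤ Rmax)
    (μ : PMF S) (P P' : S → PMF S) :
    |discValue γ r μ P - discValue γ r μ P'| ≤
      (2 * γ * Rmax / (1 - γ) ^ 2) * ∑ s, visitDist γ μ P s * tvDist (P s) (P' s) := by
  have hdist : Summable fun t => γ ^ t * tvDist (stepDist P μ t) (stepDist P' μ t) :=
    summable_pow_mul_of_abs_le hγ0 hγ1 fun t => abs_tvDist_le_one _ _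
  have hcost : Summable fun t =>
      γ ^ t * ∑ a, (stepDist P μ t a).toReal * tvDist (P a) (P' a) :=
    summable_pow_mul_of_abs_le hγ0 hγ1 fun t =>
      (stepDist P μ t).abs_sum_toReal_mul_le fun a => abs_tvDist_le_one _ _
  have hdist_le := tsum_pow_mul_le_of_succ_le_add hγ0 hγ1 (tvDist_self μ).le
    (tvDist_stepDist_succ_le μ P P') hdist hcost
  calc |discValue γ r μ P - discValue γ r μ P'|
      ≤ 2 * Rmax * ∑' t, γ ^ t * tvDist (stepDist P μ t) (stepDist P' μ t) :=
        abs_discValue_sub_le μ P P' hγ0 hγ1 hr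
    _ ≤ 2 * Rmax * (γ / (1 - γ) *
          ∑' t, γ ^ t * ∑ a, (stepDist P μ t a).toReal * tvDist (P a) (P' a)) := by
        gcongr
    _ = _ := by
        rw [sum_visitDist_mul μ P hγ0 hγ1]
        field_simp [(sub_pos.mpr hγ1).ne']

/-- Visitation-weighted simulation lemma:
`|J(μ, P) − J(μ, P')| ≤ (2·γ·R_max / (1−γ)²) · ∑_s ρ_{μ,P}(s) · TV(P s, P' s)`. -/
theorem visitation_weighted_simulation_lemma {S : Type*} [Fintype S] [Nonempty S]
    (γ : ℝ) (hγ0 : 0 ≤ γ) (hγ1 : γ < 1)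
    (Rmax : ℝ) (hR : 0 ≤ Rmax) (r : S → ℝ) (hr : ∀ s, |r s| ≤ Rmax)
    (μ : PMF S) (P P' : S → PMF S) :
    |discValue γ r μ P - discValue γ r μ P'| ≤
      (2 * γ * Rmax / (1 - γ) ^ 2) * ∑ s, visitDist γ μ P s * tvDist (P s) (P' s) :=
  visitation_weighted_simulation_lemma_general γ hγ0 hγ1 Rmax hR r hr μ P P'
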